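/- With TG and TG' as defined below, every time-and-graph TGNN T = (M_1,M_2,Cell,out) — where M_1 and M_2 are arbitrary MPNNs with the same number of layers and arbitrary combination and multiset-aggregation functions, and Cell and out are arbitrary functions — satisfies T(TG,v) = T(TG',v). -/

import Mathlib

set_option maxHeartbeats 1000000

/-! ### Vectors -/

/-- Real vectors of dimension `d`. -/
abbrev Vec (d : ℕ) := Fin d → ℝ

/-- Cast a vector along an equality of dimensions. -/
def Vec.cast {m n : ℕ} (h : m = n) (x : Vec m) : Vec n := fun j => x (Fin.cast h.symm j)

/-- Truncated ReLU. -/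
noncomputable def trReLU (x : ℝ) : ℝ := max 0 (min 1 x)

/-- A single FNN layer: an affine map with rational weights followed by entrywise trReLU. -/
structure AffineLayer (m n : ℕ) where
  weight : Fin n → Fin m → ℚ
  bias : Fin n → ℚ

noncomputable def AffineLayer.eval {m n : ℕ} (l : AffineLayer m n) (x : Vec m) : Vec n :=
  fun j => trReLU ((∑ i, (l.weight j i : ℝ) * x i) + (l.bias j : ℝ))

/-- A feedforward neural network with trReLU activations,
of input dimension `m` and output dimension `n`. -/
structure FNN (m n : ℕ) where
  depth : ℕ
  dims : ℕ → ℕ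
  dim_in : dims 0 = m
  dim_out : dims depth = n
  layers : ∀ i : ℕ, AffineLayer (dims i) (dims (i + 1))

noncomputable def FNN.evalAux {m n : ℕ} (N : FNN m n) : (i : ℕ) → Vec (N.dims 0) → Vec (N.dims i)
  | 0, x => x
  | i + 1, x => (N.layers i).eval (N.evalAux i x)

noncomputable def FNN.eval {m n : ℕ} (N : FNN m n) (x : Vec m) : Vec n :=
  Vec.cast N.dim_out (N.evalAux N.depth (Vec.cast N.dim_in.symm x))

/-! ### Message-passing GNNs -/

/-- A general message-passing GNN: a finite sequence of layers, each consisting of an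
arbitrary multiset-aggregation function and an arbitrary combination function. -/
structure MPNN where
  depth : ℕ
  dims : ℕ → ℕ
  aggDims : ℕ → ℕ
  agg : ∀ i : ℕ, Multiset (Vec (dims i)) → Vec (aggDims i)
  comb : ∀ i : ℕ, Vec (dims i) → Vec (aggDims i) → Vec (dims (i + 1))

/-- Embeddings computed by an MPNN on a labelled graph (given by a symmetric boolean
adjacency function and a labelling `c`). -/
noncomputable def MPNN.emb (M : MPNN) {V : Type} [Fintype V] [DecidableEq V]
    (adj : V → V → Bool) (c : V → Vec (M.dims 0)) : (i : ℕ) → V → Vec (M.dims i)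
  | 0 => c
  | i + 1 => fun v =>
      M.comb i (M.emb adj c i v)
        (M.agg i ((Finset.univ.filter fun u => adj v u = true).val.map
          fun u => M.emb adj c i u))

/-- The final embedding `M(G,v)`. -/
noncomputable def MPNN.run (M : MPNN) {V : Type} [Fintype V] [DecidableEq V]
    (adj : V → V → Bool) (c : V → Vec (M.dims 0)) (v : V) : Vec (M.dims M.depth) :=
  M.emb adj c M.depth v

/-- Entrywise sum of a multiset of vectors. -/
noncomputable def sumAgg (d : ℕ) (S : Multiset (Vec d)) : Vec d :=
  fun j => (S.map fun x => x j).sum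

/-- The class `M̂`: MPNNs whose combination functions are realised by FNNs with trReLU
activations and whose aggregation is the entrywise sum of the multiset. -/
structure MPNNhat where
  depth : ℕ
  dims : ℕ → ℕ
  comb : ∀ i : ℕ, FNN (dims i + dims i) (dims (i + 1))

noncomputable def MPNNhat.toMPNN (M : MPNNhat) : MPNN where
  depth := M.depth
  dims := M.dims
  aggDims := M.dims
  agg := fun i => sumAgg (M.dims i)
  comb := fun i x y => (M.comb i).eval (Fin.append x y)

/-! ### Discrete temporal graphs -/

/-- A discrete temporal graph over vertex set `V` with `k` colours: a sequence of `len`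
snapshots (indexed `0, …, len - 1`, the timestamp of index `i` being `i + 1`), each with a
symmetric set of undirected edges and a `{0,1}`-colouring of the nodes. -/
structure TemporalGraph (V : Type) (k : ℕ) where
  len : ℕ
  len_pos : 0 < len
  adj : ℕ → V → V → Bool
  symm : ∀ i u w, adj i u w = adj i w u
  label : ℕ → V → Fin k → Bool

/-- The colour vector of node `v` at time index `i`, as a real vector. -/
noncomputable def TemporalGraph.colVec {V : Type} {k : ℕ} (TG : TemporalGraph V k)
    (i : ℕ) (v : V) : Vec k :=
  fun j => if TG.label i v j then 1 else 0

/-! ### The product logic PTL_{P,Y} × K -/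

/-- Formulas of the product logic `PTL_{P,Y} × K` over `k` colour propositions. -/
inductive PTLK (k : ℕ) : Type where
  | colour : Fin k → PTLK k
  | not : PTLK k → PTLK k
  | and : PTLK k → PTLK k → PTLK k
  | dia : PTLK k → PTLK k
  | yest : PTLK k → PTLK k
  | past : PTLK k → PTLK k

/-- Satisfaction of a formula at timestamped node `(v, i)` (time indices start at `0`). -/
def Sat {V : Type} {k : ℕ} (TG : TemporalGraph V k) : PTLK k → ℕ → V → Prop
  | .colour j, i, v => TG.label i v j = true
  | .not φ, i, v => ¬ Sat TG φ i v
  | .and φ ψ, i, v => Sat TG φ i v ∧ Sat TG ψ i v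
  | .dia φ, i, v => ∃ u : V, TG.adj i v u = true ∧ Sat TG φ i u
  | .yest φ, i, v => 0 < i ∧ Sat TG φ (i - 1) v
  | .past φ, i, v => ∃ j < i, Sat TG φ j v

/-- The list of subformulas of a formula (containing the formula itself). -/
def PTLK.subformulas {k : ℕ} : PTLK k → List (PTLK k)
  | .colour j => [.colour j]
  | .not φ => .not φ :: φ.subformulas
  | .and φ ψ => .and φ ψ :: (φ.subformulas ++ ψ.subformulas)
  | .dia φ => .dia φ :: φ.subformulas
  | .yest φ => .yest φ :: φ.subformulas
  | .past φ => .past φ :: φ.subformulas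

/-- A formula is temporal if its outermost operator is `Y` or `P`. -/
def PTLK.isTemporal {k : ℕ} : PTLK k → Prop
  | .yest _ => True
  | .past _ => True
  | _ => False

/-- A formula is atomic if it is a colour proposition. -/
def PTLK.isAtomic {k : ℕ} : PTLK k → Prop
  | .colour _ => True
  | _ => False

/-! ### Recursive TGNNs over M̂ -/

/-- A recursive TGNN `T = (M, out)` with `M ∈ M̂`: the input dimension of `M` is
`k + d` where `d` is the output dimension of `M`, and `out` is a single-layer FNN with
trReLU activation. -/
structure RecTGNN (k : ℕ) where
  M : MPNNhat
  dim_in : M.dims 0 = k + M.dims M.depth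
  out : AffineLayer (M.dims M.depth) 1

/-- The state `h_v^{(depth)}(t_i)` computed by a recursive TGNN. -/
noncomputable def RecTGNN.state {k : ℕ} (T : RecTGNN k) {V : Type} [Fintype V] [DecidableEq V]
    (TG : TemporalGraph V k) : ℕ → V → Vec (T.M.dims T.M.depth)
  | 0 => fun v => T.M.toMPNN.run (TG.adj 0)
      (fun u => Vec.cast T.dim_in.symm (Fin.append (TG.colVec 0 u) (fun _ => 0))) v
  | i + 1 => fun v => T.M.toMPNN.run (TG.adj (i + 1))
      (fun u => Vec.cast T.dim_in.symm (Fin.append (TG.colVec (i + 1) u) (T.state TG i u))) v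

/-- The input labelling `h_v^{(0)}(t_i)` fed to `M` at time index `i`. -/
noncomputable def RecTGNN.input {k : ℕ} (T : RecTGNN k) {V : Type} [Fintype V] [DecidableEq V]
    (TG : TemporalGraph V k) : ℕ → V → Vec (T.M.dims 0)
  | 0 => fun u => Vec.cast T.dim_in.symm (Fin.append (TG.colVec 0 u) (fun _ => 0))
  | i + 1 => fun u => Vec.cast T.dim_in.symm (Fin.append (TG.colVec (i + 1) u) (T.state TG i u))

/-- The output `T(TG, v)` of a recursive TGNN at the last time index. -/
noncomputable def RecTGNN.output {k : ℕ} (T : RecTGNN k) {V : Type} [Fintype V] [DecidableEq V]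
    (TG : TemporalGraph V k) (v : V) : ℝ :=
  T.out.eval (T.state TG (TG.len - 1) v) 0

/-- `T` captures `φ`: on every discrete pointed temporal graph, `T` outputs `1`
iff `φ` is satisfied at the distinguished node at the last timestamp. -/
def RecTGNN.captures {k : ℕ} (T : RecTGNN k) (φ : PTLK k) : Prop :=
  ∀ (V : Type) [Fintype V] [DecidableEq V], ∀ (TG : TemporalGraph V k) (v : V),
    Sat TG φ (TG.len - 1) v ↔ T.output TG v = 1

/-! ### Time-and-graph TGNNs -/

/-- A time-and-graph TGNN `T = (M₁, M₂, Cell, out)` with arbitrary MPNNs `M₁, M₂` (of the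
same number of layers), arbitrary cell function and arbitrary output function. -/
structure TandGTGNN (k : ℕ) where
  M₁ : MPNN
  M₂ : MPNN
  sameDepth : M₁.depth = M₂.depth
  hdim : ℕ
  dim1 : M₁.dims 0 = k
  dim2 : M₂.dims 0 = hdim
  cell : Vec (M₁.dims M₁.depth) → Vec (M₂.dims M₂.depth) → Vec hdim
  out : Vec hdim → ℝ

noncomputable def TandGTGNN.state {k : ℕ} (T : TandGTGNN k) {V : Type} [Fintype V]
    [DecidableEq V] (TG : TemporalGraph V k) : ℕ → V → Vec T.hdim
  | 0 => fun v => T.cell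
      (T.M₁.run (TG.adj 0) (fun u => Vec.cast T.dim1.symm (TG.colVec 0 u)) v)
      (T.M₂.run (TG.adj 0) (fun _ => Vec.cast T.dim2.symm (fun _ => 0)) v)
  | i + 1 => fun v => T.cell
      (T.M₁.run (TG.adj (i + 1)) (fun u => Vec.cast T.dim1.symm (TG.colVec (i + 1) u)) v)
      (T.M₂.run (TG.adj (i + 1)) (fun u => Vec.cast T.dim2.symm (T.state TG i u)) v)

noncomputable def TandGTGNN.output {k : ℕ} (T : TandGTGNN k) {V : Type} [Fintype V]
    [DecidableEq V] (TG : TemporalGraph V k) (v : V) : ℝ :=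
  T.out (T.state TG (TG.len - 1) v)

def TandGTGNN.captures {k : ℕ} (T : TandGTGNN k) (φ : PTLK k) : Prop :=
  ∀ (V : Type) [Fintype V] [DecidableEq V], ∀ (TG : TemporalGraph V k) (v : V),
    Sat TG φ (TG.len - 1) v ↔ T.output TG v = 1

/-- Membership of a time-and-graph TGNN in the class `T_TandG[M̂, F]`: both MPNNs lie in
`M̂`, the cell is a single-layer FNN with trReLU activations, and so is the output. -/
def TandGTGNN.inHatF {k : ℕ} (T : TandGTGNN k) : Prop :=
  (∃ N₁ : MPNNhat, T.M₁ = N₁.toMPNN) ∧ (∃ N₂ : MPNNhat, T.M₂ = N₂.toMPNN) ∧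
  (∃ C : AffineLayer (T.M₁.dims T.M₁.depth + T.M₂.dims T.M₂.depth) T.hdim,
     ∀ x y, T.cell x y = C.eval (Fin.append x y)) ∧
  (∃ O : AffineLayer T.hdim 1, ∀ x, T.out x = O.eval x 0)

/-! ### Global TGNNs -/

/-- An operation combining an embedding vector with a time-feature vector of dimension `m`. -/
structure GlobOp (m : ℕ) where
  cdim : ℕ → ℕ
  op : ∀ d : ℕ, Vec d → Vec m → Vec (cdim d)

/-- A global TGNN `T = (M, φ', out)` with arbitrary MPNN components, arbitrary time
function, arbitrary combining operation and arbitrary output function. -/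
structure GlobTGNN (k : ℕ) where
  tdim : ℕ
  circ : GlobOp tdim
  timeFn : ℝ → Vec tdim
  depth : ℕ
  dims : ℕ → ℕ
  dim_in : dims 0 = k
  aggDims : ℕ → ℕ
  agg : ∀ i : ℕ, Multiset (Vec (circ.cdim (dims i))) → Vec (aggDims i)
  comb : ∀ i : ℕ, Vec (dims i) → Vec (aggDims i) → Vec (dims (i + 1))
  out : Vec (dims depth) → ℝ

/-- The embeddings `h_v^{(i)}(t_j)` computed by a global TGNN. -/
noncomputable def GlobTGNN.emb {k : ℕ} (T : GlobTGNN k) {V : Type} [Fintype V] [DecidableEq V]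
    (TG : TemporalGraph V k) : (i : ℕ) → ℕ → V → Vec (T.dims i)
  | 0 => fun j v => Vec.cast T.dim_in.symm (TG.colVec j v)
  | i + 1 => fun j v =>
      T.comb i (T.emb TG i j v)
        (T.agg i ((Finset.range (j + 1)).val.bind fun h =>
          (Finset.univ.filter fun u => TG.adj h v u = true).val.map
            fun u => T.circ.op _ (T.emb TG i h u) (T.timeFn ((j : ℝ) - (h : ℝ)))))

noncomputable def GlobTGNN.output {k : ℕ} (T : GlobTGNN k) {V : Type} [Fintype V]
    [DecidableEq V] (TG : TemporalGraph V k) (v : V) : ℝ :=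
  T.out (T.emb TG T.depth (TG.len - 1) v)

def GlobTGNN.captures {k : ℕ} (T : GlobTGNN k) (φ : PTLK k) : Prop :=
  ∀ (V : Type) [Fintype V] [DecidableEq V], ∀ (TG : TemporalGraph V k) (v : V),
    Sat TG φ (TG.len - 1) v ↔ T.output TG v = 1

/-- Vector concatenation as the combining operation `∥`. -/
def concatOp (m : ℕ) : GlobOp m where
  cdim := fun d => d + m
  op := fun _ x y => Fin.append x y

/-- A time2vec function. -/
structure Time2Vec (m : ℕ) where
  w : Fin m → ℚ
  b : Fin m → ℚ
  σ : ℝ → ℝ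
  period : ℝ
  period_pos : 0 < period
  periodic : Function.Periodic σ period

noncomputable def Time2Vec.eval {m : ℕ} (f : Time2Vec m) (t : ℝ) : Vec m :=
  fun j => if (j : ℕ) = 0 then (f.w j : ℝ) * t + (f.b j : ℝ)
           else f.σ ((f.w j : ℝ) * t + (f.b j : ℝ))

/-- The class `T_glob[M̂_msg, Q_time2vec, ∥]`: global TGNNs whose MPNN lies in `M̂_msg`
(combination functions given by trReLU FNNs and aggregation `agg S = Σ_{x∈S} msg(x)` with
`msg` a trReLU FNN), whose time function is a time2vec function, and whose combining
operation is vector concatenation; the output is a single-layer trReLU FNN. -/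
structure GlobTGNNmsg (k : ℕ) where
  tdim : ℕ
  timeFn : Time2Vec tdim
  depth : ℕ
  dims : ℕ → ℕ
  dim_in : dims 0 = k
  aggDims : ℕ → ℕ
  msg : ∀ i : ℕ, FNN (dims i + tdim) (aggDims i)
  comb : ∀ i : ℕ, FNN (dims i + aggDims i) (dims (i + 1))
  out : AffineLayer (dims depth) 1

noncomputable def GlobTGNNmsg.toGlob {k : ℕ} (T : GlobTGNNmsg k) : GlobTGNN k where
  tdim := T.tdim
  circ := concatOp T.tdim
  timeFn := T.timeFn.eval
  depth := T.depth
  dims := T.dims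
  dim_in := T.dim_in
  aggDims := T.aggDims
  agg := fun i S => sumAgg (T.aggDims i) (S.map (T.msg i).eval)
  comb := fun i x y => (T.comb i).eval (Fin.append x y)
  out := fun x => (T.out).eval x 0

noncomputable def GlobTGNNmsg.output {k : ℕ} (T : GlobTGNNmsg k) {V : Type} [Fintype V]
    [DecidableEq V] (TG : TemporalGraph V k) (v : V) : ℝ :=
  T.toGlob.output TG v

def GlobTGNNmsg.captures {k : ℕ} (T : GlobTGNNmsg k) (φ : PTLK k) : Prop :=
  ∀ (V : Type) [Fintype V] [DecidableEq V], ∀ (TG : TemporalGraph V k) (v : V),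
    Sat TG φ (TG.len - 1) v ↔ T.output TG v = 1

/-- The edge set `E = {{v,u₁},{v,w₁},{u₁,u₂},{w₁,w₂}}` on `V = {v,u₁,u₂,w₁,w₂}`,
encoded as `v = 0`, `u₁ = 1`, `u₂ = 2`, `w₁ = 3`, `w₂ = 4`. -/
def adjE (a b : Fin 5) : Bool :=
  (a == 0 && b == 1) || (a == 1 && b == 0) || (a == 0 && b == 3) || (a == 3 && b == 0) ||
  (a == 1 && b == 2) || (a == 2 && b == 1) || (a == 3 && b == 4) || (a == 4 && b == 3)

theorem adjE_symm : ∀ u w : Fin 5, adjE u w = adjE w u := by decide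

/-- Labels of `TG`: at time index 0 node `u₂` has colour `c₂`, at time index 1 node `u₁`
has colour `c₁`; all other entries are 0. -/
def labTG (i : ℕ) (a : Fin 5) (j : Fin 2) : Bool :=
  (i == 0 && a == 2 && j == 1) || (i == 1 && a == 1 && j == 0)

/-- Labels of `TG'`: as in `TG` except that at time index 0 node `w₂` (instead of `u₂`)
has colour `c₂`. -/
def labTG' (i : ℕ) (a : Fin 5) (j : Fin 2) : Bool :=
  (i == 0 && a == 4 && j == 1) || (i == 1 && a == 1 && j == 0)

/-- The temporal graph `TG` of Figure 2. -/
def TGfig : TemporalGraph (Fin 5) 2 where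
  len := 2
  len_pos := by norm_num
  adj := fun _ => adjE
  symm := fun _ u w => adjE_symm u w
  label := labTG

/-- The temporal graph `TG'` of Figure 2. -/
def TGfig' : TemporalGraph (Fin 5) 2 where
  len := 2
  len_pos := by norm_num
  adj := fun _ => adjE
  symm := fun _ u w => adjE_symm u w
  label := labTG'

/-! The reflection `σ` of `E` exchanging the branches `v–u₁–u₂` and `v–w₁–w₂` fixes `v` and
carries the time-1 colouring of `TG` to that of `TG'`. MPNNs are equivariant under graph
isomorphisms, so the time-1 states of `TG'` are those of `TG` transported along `σ`. At time 2
the two snapshots coincide: `M₁` receives identical inputs, and `M₂` receives inputs related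
by `σ`, so its output at the `σ`-fixed node `v` is the same for both. -/

namespace MPNN

theorem emb_equiv (M : MPNN) {V W : Type} [Fintype V] [DecidableEq V] [Fintype W]
    [DecidableEq W] {adj : V → V → Bool} {adj' : W → W → Bool} (σ : V ≃ W)
    (hσ : ∀ a b, adj' (σ a) (σ b) = adj a b) (c : W → Vec (M.dims 0)) (i : ℕ) (v : V) :
    M.emb adj' c i (σ v) = M.emb adj (c ∘ σ) i v := by
  induction i generalizing v with
  | zero => rfl
  | succ i ih =>
    have hnbrs : (Finset.univ.filter fun u => adj v u = true).map σ.toEmbedding =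
        Finset.univ.filter fun w => adj' (σ v) w = true := by
      ext w
      obtain ⟨u, rfl⟩ := σ.surjective w
      simp [hσ]
    simp only [emb, ← hnbrs, Finset.map_val, Multiset.map_map, Function.comp_def,
      Equiv.coe_toEmbedding, ih]

theorem run_equiv (M : MPNN) {V W : Type} [Fintype V] [DecidableEq V] [Fintype W]
    [DecidableEq W] {adj : V → V → Bool} {adj' : W → W → Bool} (σ : V ≃ W)
    (hσ : ∀ a b, adj' (σ a) (σ b) = adj a b) (c : W → Vec (M.dims 0)) (v : V) :
    M.run adj' c (σ v) = M.run adj (c ∘ σ) v :=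
  M.emb_equiv σ hσ c M.depth v

end MPNN

theorem TemporalGraph.colVec_eq_of_label_eq {V W : Type} {k : ℕ} {TG : TemporalGraph V k}
    {TG' : TemporalGraph W k} {i j : ℕ} {v : V} {w : W} (h : TG'.label j w = TG.label i v) :
    TG'.colVec j w = TG.colVec i v := by
  unfold TemporalGraph.colVec
  rw [h]

namespace TandGTGNN

variable {k : ℕ} (T : TandGTGNN k)

theorem state_zero_equiv {V W : Type} [Fintype V] [DecidableEq V] [Fintype W] [DecidableEq W]
    {TG : TemporalGraph V k} {TG' : TemporalGraph W k} (σ : V ≃ W)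
    (hadj : ∀ a b, TG'.adj 0 (σ a) (σ b) = TG.adj 0 a b)
    (hlabel : ∀ a, TG'.label 0 (σ a) = TG.label 0 a) (v : V) :
    T.state TG' 0 (σ v) = T.state TG 0 v := by
  have hcol (a : V) := TemporalGraph.colVec_eq_of_label_eq (hlabel a)
  simp only [state, T.M₁.run_equiv σ hadj, T.M₂.run_equiv σ hadj, Function.comp_def, hcol]

theorem state_succ_eq_of_equiv {V : Type} [Fintype V] [DecidableEq V]
    {TG TG' : TemporalGraph V k} {i : ℕ} (hadj : TG'.adj (i + 1) = TG.adj (i + 1))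
    (hlabel : TG'.label (i + 1) = TG.label (i + 1)) (σ : V ≃ V)
    (hσ : ∀ a b, TG.adj (i + 1) (σ a) (σ b) = TG.adj (i + 1) a b)
    (hstate : ∀ a, T.state TG' i (σ a) = T.state TG i a) {v : V} (hv : σ v = v) :
    T.state TG' (i + 1) v = T.state TG (i + 1) v := by
  have hcol : TG'.colVec (i + 1) = TG.colVec (i + 1) :=
    funext fun a => TemporalGraph.colVec_eq_of_label_eq (congrFun hlabel a)
  have hM₂ := T.M₂.run_equiv σ hσ (fun u => Vec.cast T.dim2.symm (T.state TG' i u)) v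
  simp only [hv, Function.comp_def, hstate] at hM₂
  simp only [state, hadj, hcol, hM₂]

end TandGTGNN

def swapBranches : Equiv.Perm (Fin 5) := Equiv.swap 1 3 * Equiv.swap 2 4

/-- every time-and-graph TGNN (with arbitrary MPNNs `M₁, M₂` having the
same number of layers and arbitrary `Cell` and `out`) produces the same output on the two
pointed temporal graphs `(TG, v)` and `(TG', v)` of Figure 2. -/
theorem TandG_same_output_on_counterexample :
    ∀ T : TandGTGNN 2, T.output TGfig (0 : Fin 5) = T.output TGfig' (0 : Fin 5) := by
  intro T
  have hσ : ∀ a b, adjE (swapBranches a) (swapBranches b) = adjE a b := by decide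
  have hlabel₀ : ∀ a, labTG' 0 (swapBranches a) = labTG 0 a := by
    intro a; funext j; revert a j; decide
  have hlabel₁ : labTG' 1 = labTG 1 := by
    funext a j; revert a j; decide
  have hstate₀ := T.state_zero_equiv (TG := TGfig) (TG' := TGfig') swapBranches hσ hlabel₀
  have hstate₁ : T.state TGfig' 1 0 = T.state TGfig 1 0 :=
    T.state_succ_eq_of_equiv (TG := TGfig) (TG' := TGfig') (i := 0) rfl hlabel₁
      swapBranches hσ hstate₀ (by decide)
  exact congrArg T.out hstate₁.symm
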